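/- arXiv:1302.4193 — 7 statements merged into one kernel-verified Lean document; each statement's English description precedes it below -/
import Mathlib

section
/- Let G be a group equipped with a topology τ such that multiplication (x,y) ↦ x·y is jointly continuous. Let τ₁ be the topology on G generated by the family of all Gδ-subsets of (G,τ) (i.e., all countable intersections of τ-open sets). Then multiplication is also jointly continuous with respect to τ₁, i.e., (G,τ₁) is again a paratopological group. -/
/-! A Gδ subset `⋂ₙ Uₙ` of `X × Y` containing `(a, b)` contains a product `(⋂ₙ uₙ) ×ˢ (⋂ₙ vₙ)` of
Gδ sets around `a` and `b`, where `uₙ ×ˢ vₙ ⊆ Uₙ` are open rectangles. Hence the Gδ topology of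
a product is coarser than the product of the Gδ topologies, and multiplication, being
continuous, stays continuous once every topology in sight is replaced by its Gδ topology. -/

open TopologicalSpace Set
open scoped Topology

abbrev gδTopology (X : Type*) [TopologicalSpace X] : TopologicalSpace X :=
  generateFrom {s | IsGδ s}

section

variable {X Y : Type*} [TopologicalSpace X] [TopologicalSpace Y]

theorem IsGδ.exists_prod_subset {W : Set (X × Y)} (hW : IsGδ W) {p : X × Y} (hp : p ∈ W) :
    ∃ u v, IsGδ u ∧ IsGδ v ∧ p.1 ∈ u ∧ p.2 ∈ v ∧ u ×ˢ v ⊆ W := by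
  obtain ⟨U, hU, rfl⟩ := isGδ_iff_eq_iInter_nat.1 hW
  have hpU : ∀ n, p ∈ U n := mem_iInter.1 hp
  choose u v hu hv hpu hpv huv using fun n => isOpen_prod_iff.1 (hU n) p.1 p.2 (hpU n)
  refine ⟨⋂ n, u n, ⋂ n, v n, .iInter fun n => (hu n).isGδ, .iInter fun n => (hv n).isGδ,
    mem_iInter.2 hpu, mem_iInter.2 hpv, ?_⟩
  rintro q ⟨hq₁, hq₂⟩
  exact mem_iInter.2 fun n => huv n ⟨mem_iInter.1 hq₁ n, mem_iInter.1 hq₂ n⟩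

theorem Continuous.gδTopology {f : X → Y} (hf : Continuous f) :
    Continuous[gδTopology X, gδTopology Y] f :=
  continuous_generateFrom_iff.2 fun _ hs => isOpen_generateFrom_of_mem (hs.preimage hf)

theorem prod_gδTopology_le :
    @instTopologicalSpaceProd X Y (gδTopology X) (gδTopology Y) ≤ gδTopology (X × Y) := by
  refine le_generateFrom fun W hW => ?_
  refine @isOpen_prod_iff X Y (gδTopology X) (gδTopology Y) W |>.2 fun a b hab => ?_
  obtain ⟨u, v, hu, hv, hau, hbv, huv⟩ := IsGδ.exists_prod_subset hW (p := (a, b)) hab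
  exact ⟨u, v, isOpen_generateFrom_of_mem hu, isOpen_generateFrom_of_mem hv, hau, hbv, huv⟩

end

/-- If `(G, τ)` is a group with jointly continuous multiplication, then
multiplication is also jointly continuous with respect to the topology generated by the
family of all Gδ-subsets of `(G, τ)`; that is, `(G, τ₁)` is again a paratopological group. -/
theorem gdelta_topology_paratopological {G : Type*} [Group G] (τ : TopologicalSpace G)
    (hmul : @ContinuousMul G τ _) :
    @ContinuousMul G (TopologicalSpace.generateFrom {s : Set G | @IsGδ G τ s}) _ := by
  let := τ
  exact @ContinuousMul.mk G (gδTopology G) _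
    (continuous_le_dom prod_gδTopology_le continuous_mul.gδTopology)
end

section
/- Let X be a Tychonoff (completely regular T₀) space and let (G, ι) be the free Abelian paratopological group on X. For every natural number n, the set Bₙ(X) consisting of the identity together with all elements of G expressible as a sum of at most n elements of ι(X) ∪ (−ι(X)) is closed in G. -/
/-- `(G, ι)` is the (Markov) free Abelian paratopological group on the space `X`
(written additively). -/
def IsFreeAbelianParatopologicalGroup.{u, v, w} {X : Type u} [TopologicalSpace X]
    (G : Type v) [AddCommGroup G] [TopologicalSpace G] [ContinuousAdd G] (ι : X → G) : Prop :=
  Topology.IsEmbedding ι ∧ AddSubgroup.closure (Set.range ι) = ⊤ ∧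
    ∀ (H : Type w) [AddCommGroup H] [TopologicalSpace H] [ContinuousAdd H] (f : X → H),
      Continuous f → ∃ fh : G →+ H, Continuous fh ∧ ∀ x : X, fh (ι x) = f x

/-- Additive `Bₙ(X)`: the identity together with all sums of at most `n` terms, each belonging
to `ι X` or the set of negatives of elements of `ι X`. -/
def addWordBall {X : Type u} {G : Type v} [AddGroup G] (ι : X → G) (n : ℕ) : Set G :=
  {g | ∃ l : List G, l.length ≤ n ∧ (∀ a ∈ l, a ∈ Set.range ι ∨ -a ∈ Set.range ι) ∧ l.sum = g}
/-!
Write `g ∉ Bₙ(X)` as `∑ cₓ • ι x`; then `∑ |cₓ| > n`. Complete regularity gives a continuous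
`F : X → [-1, 1]` with `F x = sign cₓ` on the (finite) support of `c`, and the universal property
extends it to a continuous homomorphism `φ : G → ℝ`. Every element of `Bₙ(X)` is a sum of at most
`n` terms on which `φ ≤ 1`, so `φ ≤ n` on `Bₙ(X)`, while `φ g = ∑ |cₓ| > n`: the open set
`φ⁻¹' (n, ∞)` separates `g` from `Bₙ(X)`.
-/

open Set

section AddGroup

variable {X G : Type*} [AddGroup G] {ι : X → G}

lemma zero_mem_addWordBall (n : ℕ) : (0 : G) ∈ addWordBall ι n :=
  ⟨[], Nat.zero_le n, by simp, rfl⟩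

lemma addWordBall_mono : Monotone (addWordBall ι) := by
  rintro m k hmk g ⟨l, hlen, hl, rfl⟩
  exact ⟨l, hlen.trans hmk, hl, rfl⟩

lemma add_mem_addWordBall {a b : G} {m k : ℕ} (ha : a ∈ addWordBall ι m)
    (hb : b ∈ addWordBall ι k) : a + b ∈ addWordBall ι (m + k) := by
  obtain ⟨l₁, hlen₁, hl₁, rfl⟩ := ha
  obtain ⟨l₂, hlen₂, hl₂, rfl⟩ := hb
  refine ⟨l₁ ++ l₂, ?_, ?_, List.sum_append⟩
  · rw [List.length_append]; omega
  · simpa only [List.mem_append, or_imp, forall_and] using ⟨hl₁, hl₂⟩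

lemma nsmul_mem_addWordBall {a : G} (ha : a ∈ range ι ∨ -a ∈ range ι) (k : ℕ) :
    k • a ∈ addWordBall ι k :=
  ⟨List.replicate k a, (List.length_replicate).le,
    fun _ hb => List.eq_of_mem_replicate hb ▸ ha, List.sum_replicate k a⟩

lemma zsmul_mem_addWordBall (x : X) (m : ℤ) : m • ι x ∈ addWordBall ι m.natAbs := by
  obtain ⟨k, rfl | rfl⟩ := Int.eq_nat_or_neg m
  · simpa using nsmul_mem_addWordBall (Or.inl (mem_range_self x)) k
  · simpa using nsmul_mem_addWordBall (a := -ι x) (Or.inr (by simp)) k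

lemma apply_le_of_mem_addWordBall {φ : G →+ ℝ} (hφ : ∀ x, |φ (ι x)| ≤ 1) {g : G} {n : ℕ}
    (hg : g ∈ addWordBall ι n) : φ g ≤ n := by
  obtain ⟨l, hlen, hl, rfl⟩ := hg
  have hterm : ∀ a ∈ l, φ a ≤ 1 := by
    intro a ha
    rcases hl a ha with ⟨x, rfl⟩ | ⟨x, hx⟩
    · exact (abs_le.mp (hφ x)).2
    · rw [← neg_neg a, map_neg, ← hx]
      exact neg_le.mp (abs_le.mp (hφ x)).1
  calc φ l.sum = (l.map φ).sum := map_list_sum φ l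
    _ ≤ (l.map φ).length • (1 : ℝ) := List.sum_le_card_nsmul _ _ (by simpa using hterm)
    _ ≤ n := by simpa using hlen

end AddGroup

section AddCommGroup

variable {X G : Type*} [AddCommGroup G] {ι : X → G}

lemma sum_mem_addWordBall {α : Type*} (s : Finset α) {f : α → G}
    {k : α → ℕ} (h : ∀ i ∈ s, f i ∈ addWordBall ι (k i)) :
    ∑ i ∈ s, f i ∈ addWordBall ι (∑ i ∈ s, k i) := by
  classical
  induction s using Finset.induction_on with
  | empty => exact zero_mem_addWordBall 0
  | insert i s hi ih =>
    rw [Finset.sum_insert hi, Finset.sum_insert hi]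
    exact add_mem_addWordBall (h i (s.mem_insert_self i))
      (ih fun j hj => h j (Finset.mem_insert_of_mem hj))

lemma finsuppSum_mem_addWordBall (c : X →₀ ℤ) :
    c.sum (fun x m => m • ι x) ∈ addWordBall ι (c.sum fun _ m => m.natAbs) :=
  sum_mem_addWordBall _ fun x _ => zsmul_mem_addWordBall x (c x)

lemma map_finsuppSum_zsmul_eq_natAbs {φ : G →+ ℝ} {c : X →₀ ℤ}
    (h : ∀ x ∈ c.support, φ (ι x) = (c x).sign) :
    φ (c.sum fun x m => m • ι x) = ((c.sum fun _ m => m.natAbs : ℕ) : ℝ) := by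
  rw [map_finsuppSum, Nat.cast_finsupp_sum]
  refine Finset.sum_congr rfl fun x hx => ?_
  dsimp only
  rw [map_zsmul, h x hx, zsmul_eq_mul, mul_comm, Nat.cast_natAbs]
  exact_mod_cast Int.sign_mul_self_eq_abs (c x)

end AddCommGroup

section Tychonoff

variable {X : Type*} [TopologicalSpace X] [T1Space X] [CompletelyRegularSpace X]

lemma exists_continuous_eq_one_eqOn_zero {x : X} {S : Set X} (hS : S.Finite) (hx : x ∉ S) :
    ∃ b : X → ℝ, Continuous b ∧ b x = 1 ∧ EqOn b 0 S := by
  obtain ⟨f, hf, hfx, hfS⟩ := CompletelyRegularSpace.completely_regular x S hS.isClosed hx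
  refine ⟨fun y => 1 - f y, by fun_prop, by simp [hfx], fun y hy => ?_⟩
  simp [hfS hy]

lemma exists_continuous_eqOn_of_finset (S : Finset X) (σ : X → ℝ) :
    ∃ F : X → ℝ, Continuous F ∧ EqOn F σ S := by
  classical
  choose b hb hbx hbS using fun x : X =>
    exists_continuous_eq_one_eqOn_zero (S.erase x).finite_toSet (S.notMem_erase x)
  refine ⟨fun y => ∑ x ∈ S, σ x * b x y, by fun_prop, fun y hy => ?_⟩
  show ∑ x ∈ S, σ x * b x y = σ y
  rw [Finset.sum_eq_single y (fun x hx hxy => ?_) (fun h => absurd hy h), hbx, mul_one]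
  rw [hbS x (Finset.mem_erase.mpr ⟨hxy.symm, hy⟩), Pi.zero_apply, mul_zero]

lemma exists_continuous_abs_le_one_eqOn (S : Finset X) {σ : X → ℝ} (hσ : ∀ x ∈ S, |σ x| ≤ 1) :
    ∃ F : X → ℝ, Continuous F ∧ (∀ y, |F y| ≤ 1) ∧ EqOn F σ S := by
  obtain ⟨F, hF, hFσ⟩ := exists_continuous_eqOn_of_finset S σ
  refine ⟨fun y => max (-1) (min 1 (F y)), by fun_prop,
    fun y => abs_le.mpr ⟨le_max_left _ _, max_le (by norm_num) (min_le_left _ _)⟩,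
    fun y hy => ?_⟩
  obtain ⟨h₁, h₂⟩ := abs_le.mp (hσ y hy)
  simp only [hFσ hy, min_eq_right h₂, max_eq_right h₁]

end Tychonoff

lemma IsFreeAbelianParatopologicalGroup.exists_continuous_addMonoidHom.{u, v, w}
    {X : Type u} [TopologicalSpace X] {G : Type v} [AddCommGroup G] [TopologicalSpace G]
    [ContinuousAdd G] {ι : X → G} (hfree : IsFreeAbelianParatopologicalGroup.{u, v, w} G ι)
    {H : Type} [AddCommGroup H] [TopologicalSpace H] [ContinuousAdd H] {f : X → H}
    (hf : Continuous f) : ∃ φ : G →+ H, Continuous φ ∧ ∀ x, φ (ι x) = f x := by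
  obtain ⟨φ, hφ, hφι⟩ := hfree.2.2 (ULift.{w} H) (ULift.up ∘ f) (continuous_uliftUp.comp hf)
  exact ⟨(AddEquiv.ulift : ULift H ≃+ H).toAddMonoidHom.comp φ, continuous_uliftDown.comp hφ,
    fun x => congrArg ULift.down (hφι x)⟩

/-- In the free Abelian paratopological group on a Tychonoff space `X`, each set
`Bₙ(X)` is closed. -/
theorem addWordBall_isClosed {X : Type u} [TopologicalSpace X]
    [T0Space X] [CompletelyRegularSpace X]
    {G : Type v} [AddCommGroup G] [TopologicalSpace G] [ContinuousAdd G] {ι : X → G}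
    (hfree : IsFreeAbelianParatopologicalGroup G ι) (n : ℕ) :
    IsClosed (addWordBall ι n) := by
  refine isOpen_compl_iff.mp (isOpen_iff_forall_mem_open.mpr fun g hg => ?_)
  obtain ⟨c, rfl⟩ := AddSubgroup.mem_closure_range_iff.mp (hfree.2.1 ▸ AddSubgroup.mem_top g)
  have hlarge : n < c.sum fun _ m => m.natAbs := by
    by_contra! hle
    exact hg (addWordBall_mono hle (finsuppSum_mem_addWordBall c))
  obtain ⟨F, hF, hF₁, hFc⟩ := exists_continuous_abs_le_one_eqOn c.support
    (σ := fun x => ((c x).sign : ℝ)) fun x hx => by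
      rw [← Int.cast_abs, Int.abs_sign_of_ne_zero (c.mem_support_iff.mp hx), Int.cast_one]
  obtain ⟨φ, hφ, hφι⟩ := hfree.exists_continuous_addMonoidHom hF
  have hφg := map_finsuppSum_zsmul_eq_natAbs fun x hx => (hφι x).trans (hFc hx)
  refine ⟨φ ⁻¹' Ioi n, fun b hb hbB => ?_, isOpen_Ioi.preimage hφ, ?_⟩
  · exact (apply_le_of_mem_addWordBall (fun x => hφι x ▸ hF₁ x) hbB).not_gt hb
  · rw [mem_preimage, hφg, mem_Ioi]
    exact Nat.cast_lt.mpr hlarge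
end

section
/- Let X be a Tychonoff (completely regular T₀) space, let (G, ι) be the free paratopological group on X, and let Y be a closed subspace of X. Then the subgroup of G generated by ι(Y) is closed in G. -/
/-!
Let `g` lie in the closure of `K = ⟨ι Y⟩` and write `g` as the image of a word `w` in finitely
many letters `T ⊆ X`. Complete regularity gives a continuous `u : X → ℝ`, nonpositive on `Y`,
taking distinct integer values on `T` that are positive off `Y`. Test against the free group on
`ℝ` with the group topology whose basic neighbourhoods of `1` are the products of moves
`k (of a)⁻¹ (of b) k⁻¹` of total cost `∑ |a - b| < ε`. For such a product `m` of cost `< 1/2`,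
the rounding `x ↦ ⌈x - t⌉` fails to kill some move of `m` only for `t` in a subset of `[0, 1)` of
measure `< 1`; it also fixes integers and keeps nonpositive numbers nonpositive. Hence a word with
integer letters in the closure of the subgroup generated by the nonpositive letters lies in that
subgroup. Applied to the image of `w` under `u`, and read back through `u` (injective on `T`,
positive on `T \ Y`), this gives `w ∈ ⟨Y⟩`, i.e. `g ∈ K`.
-/

/-- `(G, ι)` is the (Markov) free paratopological group on the space `X`:
`ι` is a topological embedding, `ι X` generates `G`, and every continuous map from `X` to a
paratopological group `H` extends to a continuous homomorphism on `G`. -/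
def IsFreeParatopologicalGroup.{u, v, w} {X : Type u} [TopologicalSpace X]
    (G : Type v) [Group G] [TopologicalSpace G] [ContinuousMul G] (ι : X → G) : Prop :=
  Topology.IsEmbedding ι ∧ Subgroup.closure (Set.range ι) = ⊤ ∧
    ∀ (H : Type w) [Group H] [TopologicalSpace H] [ContinuousMul H] (f : X → H),
      Continuous f → ∃ fh : G →* H, Continuous fh ∧ ∀ x : X, fh (ι x) = f x

open FreeGroup Set Topology MeasureTheory

lemma setOf_ceil_sub_ne_subset {a b : ℝ} (hab : a ≤ b) :
    {t ∈ Ico (0 : ℝ) 1 | ⌈a - t⌉ ≠ ⌈b - t⌉} ⊆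
      Ico (a - ⌈b⌉ + 1) (b - ⌈b⌉ + 1) ∪ Ico (a - ⌈b⌉ + 2) (b - ⌈b⌉ + 2) := by
  rintro t ⟨⟨ht0, ht1⟩, hne⟩
  set k := ⌈b - t⌉
  have hak : ⌈a - t⌉ ≤ k - 1 := by
    have := Int.ceil_mono (show a - t ≤ b - t by linarith)
    omega
  have hlow : a - t ≤ k - 1 := by exact_mod_cast Int.ceil_le.1 hak
  have hhigh : (k : ℝ) - 1 < b - t := by exact_mod_cast Int.lt_ceil.1 (show k - 1 < k by omega)
  have hk : k = ⌈b⌉ ∨ k = ⌈b⌉ - 1 := by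
    have h1 : k ≤ ⌈b⌉ := Int.ceil_mono (by linarith)
    have h2 : ⌈b⌉ - 1 ≤ k := by
      rw [← Int.ceil_sub_one]; exact Int.ceil_mono (by linarith)
    omega
  rcases hk with hk | hk <;> rw [hk] at hlow hhigh <;> push_cast at hlow hhigh
  · exact Or.inl ⟨by linarith, by linarith⟩
  · exact Or.inr ⟨by linarith, by linarith⟩

lemma volume_setOf_ceil_sub_ne_le (a b : ℝ) :
    volume {t ∈ Ico (0 : ℝ) 1 | ⌈a - t⌉ ≠ ⌈b - t⌉} ≤ ENNReal.ofReal (2 * |a - b|) := by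
  wlog hab : a ≤ b generalizing a b
  · simpa only [ne_comm, abs_sub_comm] using this b a (le_of_not_ge hab)
  calc _ ≤ volume (Ico (a - ⌈b⌉ + 1) (b - ⌈b⌉ + 1) ∪ Ico (a - ⌈b⌉ + 2) (b - ⌈b⌉ + 2)) :=
        measure_mono (setOf_ceil_sub_ne_subset hab)
    _ ≤ ENNReal.ofReal (b - a) + ENNReal.ofReal (b - a) := by
        refine (measure_union_le _ _).trans_eq ?_
        rw [Real.volume_Ico, Real.volume_Ico]
        ring_nf
    _ = ENNReal.ofReal (2 * |a - b|) := by
        rw [← ENNReal.ofReal_add (by linarith) (by linarith), abs_sub_comm,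
          abs_of_nonneg (by linarith)]
        ring_nf

lemma volume_setOf_exists_ceil_sub_ne_le (L : List (ℝ × ℝ)) :
    volume {t ∈ Ico (0 : ℝ) 1 | ∃ p ∈ L, ⌈p.1 - t⌉ ≠ ⌈p.2 - t⌉} ≤
      ENNReal.ofReal (2 * (L.map fun p => |p.1 - p.2|).sum) := by
  induction L with
  | nil => simp
  | cons p L ih =>
    have hsplit : {t ∈ Ico (0 : ℝ) 1 | ∃ q ∈ p :: L, ⌈q.1 - t⌉ ≠ ⌈q.2 - t⌉} =
        {t ∈ Ico (0 : ℝ) 1 | ⌈p.1 - t⌉ ≠ ⌈p.2 - t⌉} ∪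
          {t ∈ Ico (0 : ℝ) 1 | ∃ q ∈ L, ⌈q.1 - t⌉ ≠ ⌈q.2 - t⌉} := by
      ext t; simp [and_or_left]
    have hsum : 0 ≤ (L.map fun p => |p.1 - p.2|).sum :=
      List.sum_nonneg fun _ h => by obtain ⟨q, -, rfl⟩ := List.mem_map.1 h; positivity
    rw [hsplit, List.map_cons, List.sum_cons, mul_add, ENNReal.ofReal_add (by positivity)
      (by positivity)]
    exact (measure_union_le _ _).trans (add_le_add (volume_setOf_ceil_sub_ne_le _ _) ih)

lemma exists_ceil_sub_eq_of_sum_lt (L : List (ℝ × ℝ))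
    (hL : (L.map fun p => |p.1 - p.2|).sum < 1 / 2) :
    ∃ t ∈ Ico (0 : ℝ) 1, ∀ p ∈ L, ⌈p.1 - t⌉ = ⌈p.2 - t⌉ := by
  by_contra! hbad
  have hsub : Ico (0 : ℝ) 1 ⊆ {t ∈ Ico (0 : ℝ) 1 | ∃ p ∈ L, ⌈p.1 - t⌉ ≠ ⌈p.2 - t⌉} :=
    fun t ht => ⟨ht, hbad t ht⟩
  have h := (measure_mono hsub).trans (volume_setOf_exists_ceil_sub_ne_le L)
  rw [Real.volume_Ico] at h
  exact h.not_gt ((ENNReal.ofReal_lt_ofReal_iff (by norm_num)).2 (by linarith))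

lemma intCast_ceil_intCast_sub {t : ℝ} (ht : t ∈ Ico (0 : ℝ) 1) (n : ℤ) :
    ((⌈(n : ℝ) - t⌉ : ℤ) : ℝ) = n := by
  have h : ⌈-t⌉ = 0 := Int.ceil_eq_zero_iff.2 ⟨by linarith [ht.2], by linarith [ht.1]⟩
  rw [sub_eq_neg_add, Int.ceil_add_intCast, h, zero_add]

namespace FreeGroup

variable {α β : Type*}

lemma exists_finset_mem_closure (w : FreeGroup α) :
    ∃ T : Finset α, w ∈ Subgroup.closure (of '' (T : Set α)) := by
  classical
  induction w using FreeGroup.induction_on with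
  | C1 => exact ⟨∅, one_mem _⟩
  | of x => exact ⟨{x}, Subgroup.subset_closure ⟨x, by simp, rfl⟩⟩
  | inv_of x ih => obtain ⟨T, hT⟩ := ih; exact ⟨T, inv_mem hT⟩
  | mul x y ihx ihy =>
    obtain ⟨T₁, h₁⟩ := ihx
    obtain ⟨T₂, h₂⟩ := ihy
    refine ⟨T₁ ∪ T₂, mul_mem (Subgroup.closure_mono ?_ h₁) (Subgroup.closure_mono ?_ h₂)⟩ <;>
      exact image_mono (by simp)

lemma lift_mem_closure_image {G : Type*} [Group G] (f : α → G) {s : Set α} {w : FreeGroup α}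
    (hw : w ∈ Subgroup.closure (of '' s)) : lift f w ∈ Subgroup.closure (f '' s) := by
  refine (Subgroup.closure_le ((Subgroup.closure (f '' s)).comap (lift f))).2 ?_ hw
  rintro _ ⟨x, hx, rfl⟩
  exact Subgroup.subset_closure ⟨x, hx, lift_apply_of.symm⟩

lemma map_mem_closure_of_mapsTo {u : α → β} {s : Set α} {t : Set β} (hst : MapsTo u s t)
    {w : FreeGroup α} (hw : w ∈ Subgroup.closure (of '' s)) :
    map u w ∈ Subgroup.closure (of '' t) := by
  refine (Subgroup.closure_le ((Subgroup.closure (of '' t)).comap (map u))).2 ?_ hw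
  rintro _ ⟨x, hx, rfl⟩
  exact Subgroup.subset_closure ⟨u x, hst hx, map.of.symm⟩

theorem mem_closure_of_map_mem_closure {u : α → β} {T Y : Set α} {P : Set β} (hinj : InjOn u T)
    (hP : ∀ x ∈ T, u x ∈ P → x ∈ Y) {w : FreeGroup α} (hw : w ∈ Subgroup.closure (of '' T))
    (hmap : map u w ∈ Subgroup.closure (of '' P)) : w ∈ Subgroup.closure (of '' Y) := by
  classical
  let r : FreeGroup β →* FreeGroup α := lift fun b => if h : b ∈ u '' T then of h.choose else 1
  have hr : ∀ x ∈ T, r (of (u x)) = of x := by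
    intro x hx
    have h : u x ∈ u '' T := mem_image_of_mem u hx
    simp only [r, lift_apply_of, dif_pos h]
    exact congrArg of (hinj h.choose_spec.1 hx h.choose_spec.2)
  have hrw : r (map u w) = w :=
    MonoidHom.eqOn_closure (f := r.comp (map u)) (g := MonoidHom.id _)
      (by rintro _ ⟨x, hx, rfl⟩; simp [hr x hx]) hw
  have hrP : Subgroup.closure (of '' P) ≤ (Subgroup.closure (of '' Y)).comap r := by
    rw [Subgroup.closure_le]
    rintro _ ⟨b, hb, rfl⟩
    simp only [SetLike.mem_coe, Subgroup.mem_comap, r, lift_apply_of]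
    split_ifs with h
    · obtain ⟨hT, hu⟩ := h.choose_spec
      exact Subgroup.subset_closure (mem_image_of_mem of (hP _ hT (by rwa [hu])))
    · exact one_mem _
  exact hrw ▸ hrP hmap

end FreeGroup

lemma IsFreeParatopologicalGroup.exists_continuous_monoidHom {X : Type*} [TopologicalSpace X]
    {G : Type*} [Group G] [TopologicalSpace G] [ContinuousMul G] {ι : X → G}
    (hfree : IsFreeParatopologicalGroup G ι) {H : Type} [Group H] [TopologicalSpace H]
    [ContinuousMul H] {f : X → H} (hf : Continuous f) :
    ∃ φ : G →* H, Continuous φ ∧ ∀ x, φ (ι x) = f x := by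
  obtain ⟨φ, hφ, hφι⟩ := hfree.2.2 (ULift H) (fun x => ULift.up (f x)) (continuous_uliftUp.comp hf)
  exact ⟨(MulEquiv.ulift : ULift H ≃* H).toMonoidHom.comp φ, continuous_uliftDown.comp hφ,
    fun x => congrArg ULift.down (hφι x)⟩

structure RealMove where
  conj : FreeGroup ℝ
  src : ℝ
  tgt : ℝ

namespace RealMove

def val (m : RealMove) : FreeGroup ℝ := m.conj * (of m.src)⁻¹ * of m.tgt * m.conj⁻¹

def cost (m : RealMove) : ℝ := |m.src - m.tgt|

end RealMove

def cheapMoves (ε : ℝ) : Set (FreeGroup ℝ) :=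
  {w | ∃ L : List RealMove, (L.map RealMove.val).prod = w ∧ (L.map RealMove.cost).sum < ε}

lemma cheapMoves_mono : Monotone cheapMoves :=
  fun _ _ hεδ _ ⟨L, hL, hc⟩ => ⟨L, hL, hc.trans_le hεδ⟩

lemma one_mem_cheapMoves {ε : ℝ} (hε : 0 < ε) : 1 ∈ cheapMoves ε :=
  ⟨[], rfl, by simpa using hε⟩

lemma mul_mem_cheapMoves {ε δ : ℝ} {a b : FreeGroup ℝ} (ha : a ∈ cheapMoves ε)
    (hb : b ∈ cheapMoves δ) : a * b ∈ cheapMoves (ε + δ) := by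
  obtain ⟨L₁, rfl, h₁⟩ := ha
  obtain ⟨L₂, rfl, h₂⟩ := hb
  exact ⟨L₁ ++ L₂, by simp, by simp only [List.map_append, List.sum_append]; linarith⟩

lemma inv_mem_cheapMoves {ε : ℝ} {a : FreeGroup ℝ} (ha : a ∈ cheapMoves ε) :
    a⁻¹ ∈ cheapMoves ε := by
  obtain ⟨L, rfl, hc⟩ := ha
  let swap (m : RealMove) : RealMove := ⟨m.conj, m.tgt, m.src⟩
  refine ⟨(L.map swap).reverse, ?_, ?_⟩
  · have hval : ∀ m, (swap m).val = m.val⁻¹ := fun m => by simp only [RealMove.val, swap]; group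
    simp [List.prod_inv_reverse, Function.comp_def, hval]
  · have hcost : ∀ m, (swap m).cost = m.cost := fun m => abs_sub_comm _ _
    simpa [Function.comp_def, hcost] using hc

lemma conj_mem_cheapMoves {ε : ℝ} (x : FreeGroup ℝ) {a : FreeGroup ℝ} (ha : a ∈ cheapMoves ε) :
    x * a * x⁻¹ ∈ cheapMoves ε := by
  obtain ⟨L, rfl, hc⟩ := ha
  let conjBy (m : RealMove) : RealMove := ⟨x * m.conj, m.src, m.tgt⟩
  have hval : ∀ m, (conjBy m).val = MulAut.conj x m.val := fun m => by
    simp only [RealMove.val, conjBy, MulAut.conj_apply]; group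
  have hcost : ∀ m, (conjBy m).cost = m.cost := fun _ => rfl
  refine ⟨L.map conjBy, ?_, by simpa [Function.comp_def, hcost] using hc⟩
  rw [← MulAut.conj_apply, map_list_prod, List.map_map, List.map_map]
  exact congrArg _ (List.map_congr_left fun m _ => hval m)

lemma inv_of_mul_of_mem_cheapMoves {ε a b : ℝ} (h : |a - b| < ε) :
    (of a)⁻¹ * of b ∈ cheapMoves ε :=
  ⟨[⟨1, a, b⟩], by simp [RealMove.val], by simpa [RealMove.cost] using h⟩

abbrev cheapMovesBasis : GroupFilterBasis (FreeGroup ℝ) where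
  sets := cheapMoves '' Ioi 0
  nonempty := ⟨_, mem_image_of_mem _ (mem_Ioi.2 one_pos)⟩
  inter_sets := by
    rintro _ _ ⟨ε, hε, rfl⟩ ⟨δ, hδ, rfl⟩
    exact ⟨_, mem_image_of_mem _ (lt_min (mem_Ioi.1 hε) (mem_Ioi.1 hδ)),
      subset_inter (cheapMoves_mono (min_le_left _ _)) (cheapMoves_mono (min_le_right _ _))⟩
  one' := by
    rintro _ ⟨ε, hε, rfl⟩
    exact one_mem_cheapMoves hε
  mul' := by
    rintro _ ⟨ε, hε, rfl⟩
    refine ⟨_, mem_image_of_mem _ (half_pos (mem_Ioi.1 hε)), ?_⟩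
    rintro _ ⟨a, ha, b, hb, rfl⟩
    simpa using mul_mem_cheapMoves ha hb
  inv' := by
    rintro _ ⟨ε, hε, rfl⟩
    exact ⟨_, mem_image_of_mem _ hε, fun _ => inv_mem_cheapMoves⟩
  conj' := by
    rintro x _ ⟨ε, hε, rfl⟩
    exact ⟨_, mem_image_of_mem _ hε, fun _ => conj_mem_cheapMoves x⟩

abbrev cheapMovesTopology : TopologicalSpace (FreeGroup ℝ) := cheapMovesBasis.topology

section CheapMovesTopology

attribute [local instance] cheapMovesTopology

lemma continuous_freeGroup_of : Continuous (of : ℝ → FreeGroup ℝ) := by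
  refine continuous_iff_continuousAt.2 fun a => ?_
  refine (cheapMovesBasis.nhds_hasBasis (of a)).tendsto_right_iff.2 ?_
  intro V hV
  obtain ⟨ε, hε, rfl⟩ : V ∈ cheapMoves '' Ioi 0 := hV
  filter_upwards [eventually_abs_sub_lt a hε] with b hb
  exact ⟨_, inv_of_mul_of_mem_cheapMoves (by rwa [abs_sub_comm]), mul_inv_cancel_left _ _⟩

lemma exists_map_ceil_sub_eq_one {m : FreeGroup ℝ} (hm : m ∈ cheapMoves (1 / 2)) :
    ∃ t ∈ Ico (0 : ℝ) 1, map (fun x => (⌈x - t⌉ : ℝ)) m = 1 := by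
  obtain ⟨L, rfl, hc⟩ := hm
  obtain ⟨t, ht, hL⟩ := exists_ceil_sub_eq_of_sum_lt (L.map fun m => (m.src, m.tgt))
    (by rw [List.map_map]; exact hc)
  refine ⟨t, ht, ?_⟩
  rw [map_list_prod, List.map_map]
  refine List.prod_eq_one ?_
  simp only [List.mem_map, Function.comp_apply]
  rintro _ ⟨m, hm, rfl⟩
  simp [RealMove.val, hL _ (List.mem_map_of_mem hm)]

lemma mem_closure_nonpos_of_mem_closure {w : FreeGroup ℝ}
    (hint : w ∈ Subgroup.closure (of '' range ((↑) : ℤ → ℝ)))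
    (hw : w ∈ closure (Subgroup.closure (of '' Iic (0 : ℝ)) : Set (FreeGroup ℝ))) :
    w ∈ Subgroup.closure (of '' Iic (0 : ℝ)) := by
  have hnhds : (w * ·) '' cheapMoves (1 / 2) ∈ 𝓝 w :=
    (cheapMovesBasis.nhds_hasBasis w).mem_of_mem (mem_image_of_mem _ (by norm_num))
  obtain ⟨_, ⟨m, hm, rfl⟩, hwm⟩ := mem_closure_iff_nhds.1 hw _ hnhds
  obtain ⟨t, ht, hm1⟩ := exists_map_ceil_sub_eq_one hm
  set π : ℝ → ℝ := fun x => (⌈x - t⌉ : ℝ)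
  have hπw : map π w = w :=
    MonoidHom.eqOn_closure (f := map π) (g := MonoidHom.id _)
      (by rintro _ ⟨_, ⟨n, rfl⟩, rfl⟩; simp [π, intCast_ceil_intCast_sub ht]) hint
  have hπ : MapsTo π (Iic 0) (Iic 0) := fun x hx => by
    simpa [π, Int.ceil_le] using show x - t ≤ 0 by linarith [ht.1, mem_Iic.1 hx]
  simpa [hπw, hm1] using map_mem_closure_of_mapsTo hπ hwm

lemma IsFreeParatopologicalGroup.map_mem_closure_nonpos {X : Type*} [TopologicalSpace X]
    {G : Type*} [Group G] [TopologicalSpace G] [ContinuousMul G] {ι : X → G}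
    (hfree : IsFreeParatopologicalGroup G ι) {Y : Set X} {u : X → ℝ} (hu : Continuous u)
    (huY : ∀ y ∈ Y, u y ≤ 0) {w : FreeGroup X}
    (hint : map u w ∈ Subgroup.closure (of '' range ((↑) : ℤ → ℝ)))
    (hw : lift ι w ∈ closure (Subgroup.closure (ι '' Y) : Set G)) :
    map u w ∈ Subgroup.closure (of '' Iic (0 : ℝ)) := by
  obtain ⟨φ, hφ, hφι⟩ := hfree.exists_continuous_monoidHom (continuous_freeGroup_of.comp hu)
  have hφw : φ (lift ι w) = map u w := by
    rw [← MonoidHom.comp_apply]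
    congr 1
    ext x
    simp [hφι]
  have hφK : Subgroup.closure (ι '' Y) ≤ (Subgroup.closure (of '' Iic (0 : ℝ))).comap φ :=
    (Subgroup.closure_le _).2 <| by
      rintro _ ⟨y, hy, rfl⟩
      exact Subgroup.subset_closure ⟨u y, huY y hy, (hφι y).symm⟩
  exact mem_closure_nonpos_of_mem_closure hint (hφw ▸ map_mem_closure hφ hw fun _ h => hφK h)

end CheapMovesTopology

section Labelling

variable {X : Type*} [TopologicalSpace X] [CompletelyRegularSpace X]

lemma exists_continuous_eqOn_nonpos_on [T1Space X] {Y : Set X} (hY : IsClosed Y)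
    (T : Finset X) (c : X → ℝ) (hc : ∀ x ∈ T, x ∈ Y → c x ≤ 0) :
    ∃ u : X → ℝ, Continuous u ∧ EqOn u c T ∧ ∀ y ∈ Y, u y ≤ 0 := by
  classical
  have hbump : ∀ x ∈ T, ∃ f : X → unitInterval, Continuous f ∧ f x = 0 ∧
      EqOn f 1 (↑(T.erase x) ∪ {y | y ∈ Y ∧ 0 < c x}) := fun x hx =>
    CompletelyRegularSpace.completely_regular x _
      ((T.erase x).finite_toSet.isClosed.union (hY.inter isClosed_const))
      (by rintro (h | ⟨hxY, hcx⟩); exacts [by simp at h, (hc x hx hxY).not_gt hcx])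
  choose! f hfc hfx hfK using hbump
  refine ⟨fun z => ∑ x ∈ T, c x * (1 - f x z), ?_, fun z hz => ?_, fun y hy => ?_⟩
  · exact continuous_finsetSum _ fun x hx =>
      continuous_const.mul (continuous_const.sub (continuous_subtype_val.comp (hfc x hx)))
  · dsimp only
    rw [Finset.sum_eq_single_of_mem z hz fun x hx hxz => ?_]
    · simp [hfx z hz]
    · simp [hfK x hx (Or.inl (Finset.mem_erase.2 ⟨Ne.symm hxz, hz⟩))]
  · refine Finset.sum_nonpos fun x hx => ?_
    rcases le_or_gt (c x) 0 with hcx | hcx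
    · exact mul_nonpos_of_nonpos_of_nonneg hcx (sub_nonneg.2 (unitInterval.le_one _))
    · simp [hfK x hx (Or.inr ⟨hy, hcx⟩)]

lemma exists_continuous_intCast_injOn [T1Space X] {Y : Set X} (hY : IsClosed Y) (T : Finset X) :
    ∃ u : X → ℝ, Continuous u ∧ (∀ y ∈ Y, u y ≤ 0) ∧ MapsTo u T (range ((↑) : ℤ → ℝ)) ∧
      (∀ x ∈ T, u x ∈ Iic 0 → x ∈ Y) ∧ InjOn u T := by
  classical
  let c (x : X) : ℤ := if x ∈ Y then -(T.toList.idxOf x : ℤ) else T.toList.idxOf x + 1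
  obtain ⟨u, hu, huc, huY⟩ := exists_continuous_eqOn_nonpos_on hY T (fun x => (c x : ℝ))
    (fun x _ hxY => by simp [c, hxY])
  refine ⟨u, hu, huY, fun x hx => ⟨c x, (huc hx).symm⟩, fun x hx hux => ?_,
    fun x hx y hy hxy => ?_⟩
  · rw [mem_Iic, huc hx, Int.cast_nonpos] at hux
    by_contra hxY
    simp only [c, hxY, if_false] at hux
    omega
  · rw [huc hx, huc hy, Int.cast_inj] at hxy
    refine (List.idxOf_inj (Finset.mem_toList.2 hx)).1 ?_
    simp only [c] at hxy
    split_ifs at hxy <;> omega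

end Labelling

/-- If `Y` is a closed subspace of a Tychonoff space `X`, then the subgroup of
the free paratopological group on `X` generated by `ι Y` is closed. -/
theorem subgroup_generated_by_closed_subspace_isClosed {X : Type u} [TopologicalSpace X]
    [T0Space X] [CompletelyRegularSpace X]
    {G : Type v} [Group G] [TopologicalSpace G] [ContinuousMul G] {ι : X → G}
    (hfree : IsFreeParatopologicalGroup G ι)
    (Y : Set X) (hY : IsClosed Y) :
    IsClosed (Subgroup.closure (ι '' Y) : Set G) := by
  refine closure_subset_iff_isClosed.1 fun g hg => ?_
  obtain ⟨w, rfl⟩ := lift_surjective_iff_closure_range_eq_top.2 hfree.2.1 g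
  obtain ⟨T, hwT⟩ := w.exists_finset_mem_closure
  obtain ⟨u, hu, huY, huT, hpos, hinj⟩ := exists_continuous_intCast_injOn hY T
  have hS := hfree.map_mem_closure_nonpos hu huY (map_mem_closure_of_mapsTo huT hwT) hg
  exact lift_mem_closure_image ι (mem_closure_of_map_mem_closure hinj hpos hwT hS)
end

section
/- Let X be a set and let {Uₙ : n ∈ ℕ} be a sequence of subsets of X × X, each containing the diagonal {(x,x) : x ∈ X}, such that U_{n+1} ∘ U_{n+1} ∘ U_{n+1} ⊆ Uₙ for each n. Let k ∈ ℕ and k₁, …, k_p ∈ ℕ with Σ_{i=1}^{p} 2^{-k_i} < 2^{-k}. Then U_{k₁} ∘ U_{k₂} ∘ ⋯ ∘ U_{k_p} ⊆ U_k. -/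
/-!
Split the list `l = a ++ m :: b` at its weighted median, so that both `a` and `b` carry at most
half of the total weight `∑ 2^{-kᵢ} < 2^{-k}`. Then `a` and `b` have weight `< 2^{-(k+1)}`, so by
induction on the length their compositions lie in `U (k+1)`, while `2^{-m} < 2^{-k}` forces
`m ≥ k + 1` and `U m ⊆ U (k+1)`. Hence the whole composition lies in
`U (k+1) ∘ U (k+1) ∘ U (k+1) ⊆ U k`.
-/

/-- The composition `U k₁ ∘ U k₂ ∘ ⋯ ∘ U k_p` of a finite list of relations
(the empty composition being the diagonal). -/
def relListComp {X : Type u} (U : ℕ → Set (X × X)) : List ℕ → Set (X × X)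
  | [] => {p : X × X | p.1 = p.2}
  | k :: ks => SetRel.comp (U k) (relListComp U ks)

theorem List.exists_eq_append_cons_sum_map_le {α : Type*} (f : α → ℝ) {l : List α}
    (hl : l ≠ []) (hf : ∀ x ∈ l, 0 ≤ f x) {c : ℝ} (hc₀ : 0 ≤ c) (hc : c ≤ (l.map f).sum) :
    ∃ a x b, l = a ++ x :: b ∧ (a.map f).sum ≤ c ∧ (b.map f).sum ≤ (l.map f).sum - c := by
  induction l generalizing c with
  | nil => exact absurd rfl hl
  | cons y t ih =>
    simp only [List.map_cons, List.sum_cons] at hc ⊢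
    by_cases hy : c ≤ f y
    · exact ⟨[], y, t, rfl, by simpa using hc₀, by linarith⟩
    · have ht : t ≠ [] := by
        rintro rfl
        simp only [List.map_nil, List.sum_nil] at hc
        linarith
      obtain ⟨a, x, b, rfl, ha, hb⟩ := ih ht (fun x hx => hf x (List.mem_cons_of_mem y hx))
        (c := c - f y) (by linarith) (by linarith)
      refine ⟨y :: a, x, b, rfl, ?_, by linarith⟩
      simp only [List.map_cons, List.sum_cons]
      linarith

section

variable {X : Type u} (U : ℕ → Set (X × X))

theorem relListComp_append (a b : List ℕ) :
    relListComp U (a ++ b) = SetRel.comp (relListComp U a) (relListComp U b) := by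
  induction a with
  | nil => exact (SetRel.id_comp _).symm
  | cons x t ih => simp only [List.cons_append, relListComp, ih, SetRel.comp_assoc]

theorem relListComp_append_cons (a : List ℕ) (m : ℕ) (b : List ℕ) :
    relListComp U (a ++ m :: b) =
      SetRel.comp (relListComp U a) (SetRel.comp (U m) (relListComp U b)) :=
  relListComp_append U a (m :: b)

variable {U}

theorem relListComp_nil_subset (hrefl : ∀ n, ∀ x : X, (x, x) ∈ U n) (k : ℕ) :
    relListComp U [] ⊆ U k := by
  rintro ⟨x, y⟩ (rfl : x = y)
  exact hrefl k x

theorem antitone_of_comp_comp_subset (hrefl : ∀ n, ∀ x : X, (x, x) ∈ U n)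
    (hcomp : ∀ n : ℕ, SetRel.comp (SetRel.comp (U (n + 1)) (U (n + 1))) (U (n + 1)) ⊆ U n) :
    Antitone U :=
  antitone_nat_of_succ_le fun n p hp => hcomp n ⟨p.1, ⟨p.1, hrefl _ _, hrefl _ _⟩, hp⟩

end

/-- If `U (n+1) ∘ U (n+1) ∘ U (n+1) ⊆ U n` for each `n` and
`Σᵢ 2^{-kᵢ} < 2^{-k}`, then `U k₁ ∘ ⋯ ∘ U k_p ⊆ U k`. -/
theorem relListComp_subset_of_sum_lt {X : Type u} (U : ℕ → Set (X × X))
    (hrefl : ∀ n, ∀ x : X, (x, x) ∈ U n)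
    (hcomp : ∀ n : ℕ, SetRel.comp (SetRel.comp (U (n + 1)) (U (n + 1))) (U (n + 1)) ⊆ U n)
    (l : List ℕ) (k : ℕ)
    (hsum : (l.map fun i => ((1 : ℝ) / 2) ^ i).sum < ((1 : ℝ) / 2) ^ k) :
    relListComp U l ⊆ U k := by
  set w : ℕ → ℝ := fun i => (1 / 2) ^ i
  rcases eq_or_ne l [] with rfl | hl
  · exact relListComp_nil_subset hrefl k
  have hw : ∀ x ∈ l.map w, 0 ≤ x := fun x hx => by
    obtain ⟨i, -, rfl⟩ := List.mem_map.mp hx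
    positivity
  have hS : 0 ≤ (l.map w).sum := List.sum_nonneg hw
  obtain ⟨a, m, b, rfl, ha, hb⟩ := List.exists_eq_append_cons_sum_map_le w hl
    (fun i _ => by positivity) (by positivity : 0 ≤ (l.map w).sum / 2) (half_le_self hS)
  have hhalf : (1 / 2 : ℝ) ^ k / 2 = (1 / 2) ^ (k + 1) := by ring
  have hm : U m ⊆ U (k + 1) := by
    refine antitone_of_comp_comp_subset hrefl hcomp (Nat.succ_le_of_lt ?_)
    have hwm : w m ≤ ((a ++ m :: b).map w).sum :=
      List.single_le_sum hw _ (by simp)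
    exact (pow_lt_pow_iff_right_of_lt_one₀ (by norm_num) (by norm_num)).mp (hwm.trans_lt hsum)
  have hA := relListComp_subset_of_sum_lt U hrefl hcomp a (k + 1) (by linarith)
  have hB := relListComp_subset_of_sum_lt U hrefl hcomp b (k + 1) (by linarith)
  rw [relListComp_append_cons, ← SetRel.comp_assoc]
  exact (SetRel.comp_subset_comp (SetRel.comp_subset_comp hA hm) hB).trans (hcomp k)
termination_by l.length
decreasing_by all_goals subst_vars; simp only [List.length_append, List.length_cons]; omega
end

section
/- Let G be a group with identity e and let {Vᵢ : i ∈ ℕ} be a sequence of subsets of G such that e ∈ Vᵢ and Vᵢ₊₁ · Vᵢ₊₁ · Vᵢ₊₁ ⊆ Vᵢ for each i ∈ ℕ. Let r ∈ ℕ and k₁, …, k_p ∈ ℕ with Σ_{i=1}^{p} 2^{-k_i} < 2^{-r}. Then V_{k₁} · V_{k₂} ⋯ V_{k_p} ⊆ V_r. -/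
open Pointwise

/-! Split the word `V k₁ ⋯ V k_p` at the first letter where the running weight `Σ 2^{-kᵢ}` reaches
`2^{-(r+1)}`: the prefix before it and the suffix after it both weigh less than `2^{-(r+1)}`, and the
letter itself has `k ≥ r + 1`. By induction on the length, each piece lies in `V (r+1)`, so the
word lies in `V (r+1) · V (r+1) · V (r+1) ⊆ V r`. -/

section Split

variable {ι α : Type*} [AddCommGroup α] [LinearOrder α] [IsOrderedAddMonoid α]

theorem List.exists_eq_append_cons_of_add_sum_lt (f : ι → α) {h : α} (hh : 0 < h) :
    ∀ (l : List ι) (s : α), l ≠ [] → s < h → s + (l.map f).sum < h + h →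
      ∃ a i b, l = a ++ i :: b ∧ s + (a.map f).sum < h ∧ (b.map f).sum < h
  | [], _, hl, _, _ => absurd rfl hl
  | [i], s, _, hs, _ => ⟨[], i, [], rfl, by simpa using hs, by simpa using hh⟩
  | i :: j :: t, s, _, hs, hsum => by
    by_cases hi : s + f i < h
    · obtain ⟨a, k, b, hjt, ha, hb⟩ := exists_eq_append_cons_of_add_sum_lt f hh (j :: t) (s + f i)
        (List.cons_ne_nil _ _) hi (by simpa [add_assoc] using hsum)
      exact ⟨i :: a, k, b, by rw [hjt, List.cons_append], by simpa [add_assoc] using ha, hb⟩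
    · refine ⟨[], i, j :: t, rfl, by simpa using hs, ?_⟩
      rw [List.map_cons, List.sum_cons, ← add_assoc] at hsum
      exact lt_of_add_lt_add_left ((add_le_add_left (not_lt.mp hi) _).trans_lt hsum)

theorem List.exists_eq_append_cons_of_sum_lt_add (f : ι → α) {h : α} (hh : 0 < h) {l : List ι}
    (hl : l ≠ []) (hsum : (l.map f).sum < h + h) :
    ∃ a i b, l = a ++ i :: b ∧ (a.map f).sum < h ∧ (b.map f).sum < h := by
  simpa using l.exists_eq_append_cons_of_add_sum_lt f hh 0 hl hh (by simpa using hsum)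

end Split

section Cube

variable {G : Type*} [Group G] {V : ℕ → Set G}

theorem antitone_of_one_mem_of_mul_mul_subset (hone : ∀ i, (1 : G) ∈ V i)
    (hcube : ∀ i, V (i + 1) * V (i + 1) * V (i + 1) ⊆ V i) : Antitone V :=
  antitone_nat_of_succ_le fun n x hx => by
    simpa using hcube n (Set.mul_mem_mul (Set.mul_mem_mul (hone (n + 1)) (hone (n + 1))) hx)

theorem list_prod_append_cons_subset (hcube : ∀ i, V (i + 1) * V (i + 1) * V (i + 1) ⊆ V i)
    {r i : ℕ} {a b : List ℕ} (ha : (a.map V).prod ⊆ V (r + 1)) (hi : V i ⊆ V (r + 1))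
    (hb : (b.map V).prod ⊆ V (r + 1)) : ((a ++ i :: b).map V).prod ⊆ V r := by
  rw [List.map_append, List.prod_append, List.map_cons, List.prod_cons, ← mul_assoc]
  exact (Set.mul_subset_mul (Set.mul_subset_mul ha hi) hb).trans (hcube r)

end Cube

theorem list_prod_subset_of_sum_lt_general {G : Type u} [Group G] (V : ℕ → Set G)
    (hone : ∀ i : ℕ, (1 : G) ∈ V i)
    (hcube : ∀ i : ℕ, V (i + 1) * V (i + 1) * V (i + 1) ⊆ V i)
    (l : List ℕ) (r : ℕ)
    (hsum : (l.map fun i => ((1 : ℝ) / 2) ^ i).sum < ((1 : ℝ) / 2) ^ r) :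
    (l.map V).prod ⊆ V r := by
  set f : ℕ → ℝ := fun i => ((1 : ℝ) / 2) ^ i
  induction hn : l.length using Nat.strong_induction_on generalizing l r with
  | _ n ih =>
    rcases eq_or_ne l [] with rfl | hl
    · simpa using hone r
    have hhalf : (l.map f).sum < f (r + 1) + f (r + 1) := by
      convert hsum using 1; simp only [f]; ring
    obtain ⟨a, i, b, rfl, ha, hb⟩ :=
      List.exists_eq_append_cons_of_sum_lt_add f (pow_pos (by norm_num) _) hl hhalf
    have hfi : f i < f r := by
      have hsplit : ((a ++ i :: b).map f).sum = (a.map f).sum + f i + (b.map f).sum := by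
        simp [add_assoc]
      have hpos (m : List ℕ) : 0 ≤ (m.map f).sum := List.sum_nonneg (by simp [f])
      linarith [hpos a, hpos b]
    have hri : r + 1 ≤ i := (pow_lt_pow_iff_right_of_lt_one₀ (by norm_num) (by norm_num)).mp hfi
    subst hn
    exact list_prod_append_cons_subset hcube (ih _ (by simp) a (r + 1) ha rfl)
      (antitone_of_one_mem_of_mul_mul_subset hone hcube hri) (ih _ (by simp; omega) b (r + 1) hb rfl)

/-- If `e ∈ Vᵢ` and `Vᵢ₊₁ · Vᵢ₊₁ · Vᵢ₊₁ ⊆ Vᵢ` for each `i`, and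
`Σᵢ 2^{-kᵢ} < 2^{-r}`, then `V k₁ · V k₂ ⋯ V k_p ⊆ V r`. -/
theorem list_prod_subset_of_sum_lt {G : Type u} [Group G] (V : ℕ → Set G)
    (hone : ∀ i : ℕ, (1 : G) ∈ V i)
    (hcube : ∀ i : ℕ, V (i + 1) * V (i + 1) * V (i + 1) ⊆ V i)
    (l : List ℕ) (hl : l ≠ []) (r : ℕ)
    (hsum : (l.map fun i => ((1 : ℝ) / 2) ^ i).sum < ((1 : ℝ) / 2) ^ r) :
    (l.map V).prod ⊆ V r :=
  list_prod_subset_of_sum_lt_general V hone hcube l r hsum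
end

section
/- Let (P, ≤) be a quasi-ordered set (preorder) such that every sequence (pₙ)_{n∈ℕ} of elements of P has a lower bound in P (i.e., there exists q ∈ P with q ≤ pₙ for all n). Let P^ω denote the set of all sequences s : ℕ → P, quasi-ordered coordinatewise: s ≤ t iff s(n) ≤ t(n) for all n ∈ ℕ. Then d(P^ω, ≤) = d(P, ≤), where d denotes the minimal cardinality of a dense subset. -/
/-!
Both inequalities are instances of one transfer principle: if `f : P → Q` maps, for every `q`,
the whole down-set of some `p` into the down-set of `q`, then `f` sends dense sets to dense sets,
so `d(Q) ≤ d(P)`. Constant sequences `P → P^ω` qualify, taking for `p` a lower bound of the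
given sequence; a choice of lower bounds `P^ω → P` qualifies, taking for `p` the constant
sequence at `q`.
-/

/-- A subset `E` of a quasi-ordered set is dense if every element lies above
some element of `E`. -/
def IsDenseBelow {P : Type u} (le : P → P → Prop) (E : Set P) : Prop :=
  ∀ p : P, ∃ q ∈ E, le q p

/-- `d(P, ≤)`: the minimal cardinality of a dense subset of `P`. -/
noncomputable def densNum (P : Type u) (le : P → P → Prop) : Cardinal.{u} :=
  sInf {c : Cardinal.{u} | ∃ E : Set P, IsDenseBelow le E ∧ Cardinal.mk E = c}

section Transfer

variable {P Q : Type u} {leP : P → P → Prop} {leQ : Q → Q → Prop}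

theorem densNum_le_mk {E : Set P} (hE : IsDenseBelow leP E) : densNum P leP ≤ Cardinal.mk E :=
  csInf_le (OrderBot.bddBelow _) ⟨E, hE, rfl⟩

theorem exists_isDenseBelow_mk_eq_densNum (hrefl : ∀ p, leP p p) :
    ∃ E : Set P, IsDenseBelow leP E ∧ Cardinal.mk E = densNum P leP :=
  csInf_mem (s := {c | ∃ E : Set P, IsDenseBelow leP E ∧ Cardinal.mk E = c})
    ⟨_, Set.univ, fun p => ⟨p, trivial, hrefl p⟩, rfl⟩

theorem IsDenseBelow.image {f : P → Q} (hf : ∀ q, ∃ p, ∀ p', leP p' p → leQ (f p') q)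
    {E : Set P} (hE : IsDenseBelow leP E) : IsDenseBelow leQ (f '' E) := by
  intro q
  obtain ⟨p, hp⟩ := hf q
  obtain ⟨e, he, hep⟩ := hE p
  exact ⟨f e, Set.mem_image_of_mem f he, hp e hep⟩

theorem densNum_le_densNum_of_map (hrefl : ∀ p, leP p p) (f : P → Q)
    (hf : ∀ q, ∃ p, ∀ p', leP p' p → leQ (f p') q) : densNum Q leQ ≤ densNum P leP := by
  obtain ⟨E, hE, hmk⟩ := exists_isDenseBelow_mk_eq_densNum hrefl
  calc densNum Q leQ ≤ Cardinal.mk (f '' E) := densNum_le_mk (hE.image hf)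
    _ ≤ Cardinal.mk E := Cardinal.mk_image_le
    _ = densNum P leP := hmk

end Transfer

/-- If every sequence in the quasi-ordered set `P` has a lower bound, then
`d(P^ω) = d(P)` for the coordinatewise quasi-order on sequences. -/
theorem densNum_pi_eq_of_countable_lower_bounds {P : Type u} [Preorder P]
    (hlb : ∀ s : ℕ → P, ∃ q : P, ∀ n : ℕ, q ≤ s n) :
    densNum (ℕ → P) (fun s t => ∀ n : ℕ, s n ≤ t n) = densNum P (· ≤ ·) := by
  choose lb hlb using hlb
  apply le_antisymm
  · refine densNum_le_densNum_of_map le_refl (fun p _ => p) fun s => ⟨lb s, ?_⟩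
    exact fun p hp n => hp.trans (hlb s n)
  · refine densNum_le_densNum_of_map (fun s n => le_refl (s n)) lb fun p => ⟨fun _ => p, ?_⟩
    exact fun s hs => (hlb s 0).trans (hs 0)
end

section
/- Let X be a Tychonoff (completely regular T₀) space that contains an infinite compact subset, and let (G, ι) be the free Abelian paratopological group on X. Then 𝔟 ≤ χ(e, G), where 𝔟 is the bounding number, i.e., the smallest cardinality of a family F ⊆ ℕ^ℕ that is unbounded with respect to eventual domination, and χ(e, G) is the minimal cardinality of a neighborhood base at the identity e of G. -/
/-- `f <* g`: eventual strict domination of functions `ℕ → ℕ`. -/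
def EventuallyLT (f g : ℕ → ℕ) : Prop := ∀ᶠ n in Filter.atTop, f n < g n

/-- The bounding number `𝔟`: the smallest cardinality of a family of functions `ℕ → ℕ`
unbounded with respect to eventual domination. -/
noncomputable def boundingNumber : Cardinal.{0} :=
  sInf {c : Cardinal.{0} | ∃ F : Set (ℕ → ℕ),
    (¬ ∃ g : ℕ → ℕ, ∀ f ∈ F, EventuallyLT f g) ∧ Cardinal.mk F = c}

/-- `χ(p, Y)`: the minimal cardinality of a neighborhood base at `p`. -/
noncomputable def charAt {Y : Type v} [TopologicalSpace Y] (p : Y) : Cardinal.{v} :=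
  sInf {c : Cardinal.{v} | ∃ B : Set (Set Y),
    (∀ V ∈ B, V ∈ nhds p) ∧ (∀ U ∈ nhds p, ∃ V ∈ B, V ⊆ U) ∧ Cardinal.mk B = c}

/-! Take an injective sequence `s` in the infinite compact set and an accumulation point `y` of
its range. Every neighbourhood `U` of `0` gives `g_U : ℕ → ℕ` with
`(m + 1) • (ι (s (g_U m)) - ι y) ∈ U` and `s (g_U m) ≠ y`. If `χ(0, G) < 𝔟`, the functions `g_U`
for `U` in a minimal base are all dominated by one `g`. From `g` one builds a lower semicontinuous
`φ ≤ 0` with `φ y = 0` and `(M + 1) • φ (s n) ≤ -1` whenever `n < g M`. Since `ℝ` with the upper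
topology is a paratopological group whose continuous maps are the lower semicontinuous ones, `φ`
extends to a lower semicontinuous homomorphism `Φ`, and no basic set fits into `{Φ > -1}`. -/

open Filter Topology Set Function Cardinal Topology.WithUpper

section UpperTopology

variable {α : Type*}

instance [AddCommGroup α] : AddCommGroup (WithUpper α) := ‹AddCommGroup α›

lemma continuous_toUpper_comp_iff [LinearOrder α] {X : Type*} [TopologicalSpace X]
    {f : X → α} : Continuous (toUpper ∘ f) ↔ LowerSemicontinuous f := by
  rw [lowerSemicontinuous_iff_isOpen_preimage]
  refine ⟨fun hf a => ?_, fun hf => continuous_generateFrom_iff.2 ?_⟩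
  · have hopen := hf.isOpen_preimage _
      (TopologicalSpace.isOpen_generateFrom_of_mem ⟨toUpper a, rfl⟩)
    rwa [compl_Iic] at hopen
  · rintro _ ⟨a, rfl⟩
    rw [compl_Iic]
    exact hf a

instance [AddCommGroup α] [LinearOrder α] [IsOrderedAddMonoid α] [DenselyOrdered α] :
    ContinuousAdd (WithUpper α) := by
  refine ⟨(continuous_toUpper_comp_iff (f := fun p : WithUpper α × WithUpper α =>
    ofUpper p.1 + ofUpper p.2)).2 ?_⟩
  have hofUpper : LowerSemicontinuous (ofUpper : WithUpper α → α) :=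
    continuous_toUpper_comp_iff.1 continuous_id
  rw [lowerSemicontinuous_iff_isOpen_preimage]
  intro a
  have hsum : (fun p : WithUpper α × WithUpper α => ofUpper p.1 + ofUpper p.2) ⁻¹' Ioi a =
      ⋃ c : α, (ofUpper ⁻¹' Ioi c) ×ˢ (ofUpper ⁻¹' Ioi (a - c)) := by
    ext ⟨x, y⟩
    simp only [mem_preimage, mem_Ioi, mem_iUnion, mem_prod]
    refine ⟨fun h => ?_, fun ⟨c, hc, hac⟩ => ?_⟩
    · obtain ⟨c, hyc, hcx⟩ := exists_between (sub_lt_iff_lt_add.2 h)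
      exact ⟨c, hcx, sub_lt_comm.1 hyc⟩
    · exact (sub_lt_iff_lt_add'.1 hac).trans (add_lt_add_left hc _)
  rw [hsum]
  exact isOpen_iUnion fun c => (hofUpper.isOpen_preimage c).prod (hofUpper.isOpen_preimage _)

end UpperTopology

lemma lowerSemicontinuous_of_finite_sublevel {X β : Type*} [TopologicalSpace X] [T1Space X]
    [LinearOrder β] {φ : X → β} {c : β} (hφc : ∀ x, φ x ≤ c)
    (hfin : ∀ a < c, {x | φ x ≤ a}.Finite) : LowerSemicontinuous φ := by
  rw [lowerSemicontinuous_iff_isOpen_preimage]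
  intro a
  rcases lt_or_ge a c with hac | hca
  · have hcompl : φ ⁻¹' Ioi a = {x | φ x ≤ a}ᶜ := by ext; simp
    rw [hcompl]
    exact (hfin a hac).isClosed.isOpen_compl
  · have hempty : φ ⁻¹' Ioi a = ∅ :=
      eq_empty_of_forall_notMem fun x hx => (hφc x).not_gt (hca.trans_lt hx)
    rw [hempty]
    exact isOpen_empty

lemma exists_tendsto_atTop_le_of_lt (g : ℕ → ℕ) :
    ∃ h : ℕ → ℕ, Tendsto h atTop atTop ∧ ∀ M n, n < g M → h n ≤ M := by
  classical
  have hex : ∀ n, ∃ j, n < g j + j := fun n => ⟨n + 1, by omega⟩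
  refine ⟨fun n => Nat.find (hex n), tendsto_atTop_atTop.2 fun J => ?_,
    fun M n hn => Nat.find_min' _ (by omega)⟩
  refine ⟨∑ j ∈ Finset.range J, g j + J, fun n hn => ?_⟩
  by_contra! hlt
  have hbound : g (Nat.find (hex n)) ≤ ∑ j ∈ Finset.range J, g j :=
    Finset.single_le_sum (fun j _ => Nat.zero_le (g j)) (Finset.mem_range.2 hlt)
  have := Nat.find_spec (hex n)
  omega

lemma exists_tendsto_zero_one_le_mul (g : ℕ → ℕ) :
    ∃ ε : ℕ → ℝ, (∀ n, 0 ≤ ε n) ∧ Tendsto ε atTop (𝓝 0) ∧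
      ∀ M n, n < g M → 1 ≤ ((M : ℝ) + 1) * ε n := by
  obtain ⟨h, hh, hle⟩ := exists_tendsto_atTop_le_of_lt g
  refine ⟨fun n => 1 / ((h n : ℝ) + 1), fun n => by positivity,
    tendsto_one_div_add_atTop_nhds_zero_nat.comp hh, fun M n hn => ?_⟩
  have hhM : (h n : ℝ) ≤ M := by exact_mod_cast hle M n hn
  rw [mul_one_div, one_le_div (by positivity)]
  linarith

lemma exists_lowerSemicontinuous_eq_neg {X : Type*} [TopologicalSpace X] [T1Space X]
    {s : ℕ → X} (hs : Injective s) (y : X) {ε : ℕ → ℝ} (hε₀ : ∀ n, 0 ≤ ε n)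
    (hε : Tendsto ε atTop (𝓝 0)) :
    ∃ φ : X → ℝ, LowerSemicontinuous φ ∧ φ y = 0 ∧ ∀ n, s n ≠ y → φ (s n) = -ε n := by
  classical
  set φ : X → ℝ := update (extend s (fun n => -ε n) 0) y 0
  have hφs : ∀ n, s n ≠ y → φ (s n) = -ε n := fun n hn => by
    simp only [φ, update_of_ne hn, hs.extend_apply]
  have hφ_cases : ∀ x, φ x = 0 ∨ ∃ n, s n = x ∧ φ x = -ε n := by
    intro x
    by_cases hxy : x = y
    · simp [φ, hxy]
    by_cases hx : ∃ n, s n = x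
    · obtain ⟨n, rfl⟩ := hx
      exact .inr ⟨n, rfl, hφs n hxy⟩
    · left
      simp only [φ, update_of_ne hxy, extend_apply' _ _ _ hx, Pi.zero_apply]
  have hφ_nonpos : ∀ x, φ x ≤ 0 := fun x => by
    rcases hφ_cases x with hx | ⟨n, -, hx⟩ <;> simp [hx, hε₀]
  refine ⟨φ, lowerSemicontinuous_of_finite_sublevel hφ_nonpos fun a ha => ?_, by simp [φ], hφs⟩
  have hεsmall : {n | -a ≤ ε n}.Finite := by
    have := hε.eventually (gt_mem_nhds (neg_pos.2 ha))
    rw [← Nat.cofinite_eq_atTop, eventually_cofinite] at this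
    simpa using this
  refine (hεsmall.image s).subset fun x (hx : φ x ≤ a) => ?_
  rcases hφ_cases x with h0 | ⟨n, rfl, hn⟩
  · exact absurd (h0 ▸ hx) (not_le.2 ha)
  · exact ⟨n, show -a ≤ ε n by linarith, rfl⟩

lemma Set.Infinite.exists_injective_accPt_range_of_isCompact {X : Type*} [TopologicalSpace X]
    {K : Set X} (hKinf : K.Infinite) (hK : IsCompact K) :
    ∃ s : ℕ → X, Injective s ∧ ∃ y, AccPt y (𝓟 (range s)) := by
  have hs : Injective fun n => (hKinf.natEmbedding K n : X) :=
    Subtype.val_injective.comp hKinf.natEmbedding.injective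
  obtain ⟨y, -, hy⟩ := (infinite_range_of_injective hs).exists_accPt_of_subset_isCompact hK
    (range_subset_iff.2 fun n => (hKinf.natEmbedding K n).2)
  exact ⟨_, hs, y, hy⟩

lemma AccPt.exists_nsmul_sub_mem {X G : Type*} [TopologicalSpace X] [AddCommGroup G]
    [TopologicalSpace G] [ContinuousAdd G] {f : X → G} (hf : Continuous f) {S : Set X} {y : X}
    (hy : AccPt y (𝓟 S)) {U : Set G} (hU : U ∈ 𝓝 0) (k : ℕ) :
    ∃ x ∈ S, x ≠ y ∧ k • (f x - f y) ∈ U := by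
  have hcont : Continuous fun x => k • (f x - f y) := by
    simp only [sub_eq_add_neg]
    exact (hf.add continuous_const).nsmul k
  have hpre : (fun x => k • (f x - f y)) ⁻¹' U ∈ 𝓝 y :=
    hcont.continuousAt.preimage_mem_nhds (by simpa using hU)
  obtain ⟨x, ⟨hxU, hxS⟩, hxy⟩ := accPt_iff_nhds.1 hy _ hpre
  exact ⟨x, hxS, hxy, hxU⟩

theorem IsFreeAbelianParatopologicalGroup.exists_lowerSemicontinuous_addMonoidHom
    {X : Type u} [TopologicalSpace X] {G : Type v} [AddCommGroup G] [TopologicalSpace G]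
    [ContinuousAdd G] {ι : X → G} (hfree : IsFreeAbelianParatopologicalGroup.{u, v, w} G ι)
    {φ : X → ℝ} (hφ : LowerSemicontinuous φ) :
    ∃ Φ : G →+ ℝ, LowerSemicontinuous Φ ∧ ∀ x, Φ (ι x) = φ x := by
  obtain ⟨Ψ, hΨ, hΨι⟩ := hfree.2.2 (ULift.{w} (WithUpper ℝ)) (ULift.up ∘ toUpper ∘ φ)
    (continuous_uliftUp.comp (continuous_toUpper_comp_iff.2 hφ))
  refine ⟨(AddEquiv.ulift.toAddMonoidHom.comp Ψ : G →+ WithUpper ℝ), ?_, fun x => ?_⟩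
  · exact continuous_toUpper_comp_iff.1 (continuous_uliftDown.comp hΨ :)
  · change ofUpper (Ψ (ι x)).down = φ x
    rw [hΨι]
    rfl

lemma exists_eventuallyLT_of_lift_mk_lt_boundingNumber {I : Type v} (f : I → ℕ → ℕ)
    (hf : lift.{0} #I < lift.{v} boundingNumber) : ∃ g : ℕ → ℕ, ∀ i, EventuallyLT (f i) g := by
  by_contra hunbounded
  have hle : boundingNumber ≤ #(range f) := by
    unfold boundingNumber
    apply csInf_le'
    exact ⟨range f, fun ⟨g, hg⟩ => hunbounded ⟨g, fun i => hg _ ⟨i, rfl⟩⟩, rfl⟩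
  have hrange : lift.{v} #(range f) ≤ lift.{0} #I := mk_range_le_lift
  exact (lift_le.2 hle |>.trans hrange |>.trans_lt hf).false

lemma exists_nhds_basis_mk_eq_charAt {Y : Type v} [TopologicalSpace Y] (p : Y) :
    ∃ B : Set (Set Y), (∀ V ∈ B, V ∈ 𝓝 p) ∧ (∀ U ∈ 𝓝 p, ∃ V ∈ B, V ⊆ U) ∧ #B = charAt p := by
  have hne : {c : Cardinal.{v} | ∃ B : Set (Set Y), (∀ V ∈ B, V ∈ 𝓝 p) ∧
      (∀ U ∈ 𝓝 p, ∃ V ∈ B, V ⊆ U) ∧ #B = c}.Nonempty :=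
    ⟨_, {V | V ∈ 𝓝 p}, fun _ hV => hV, fun U hU => ⟨U, hU, subset_rfl⟩, rfl⟩
  exact csInf_mem hne

/-- If a Tychonoff space `X` contains an infinite compact subset, then
`𝔟 ≤ χ(e, AP(X))` for the free Abelian paratopological group `(G, ι)` on `X`. -/
theorem boundingNumber_le_char_freeAbelianParatopGroup {X : Type u} [TopologicalSpace X]
    [T0Space X] [CompletelyRegularSpace X]
    (hcpt : ∃ K : Set X, IsCompact K ∧ K.Infinite)
    {G : Type v} [AddCommGroup G] [TopologicalSpace G] [ContinuousAdd G] {ι : X → G}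
    (hfree : IsFreeAbelianParatopologicalGroup G ι) :
    Cardinal.lift.{v} boundingNumber ≤ Cardinal.lift.{0} (charAt (0 : G)) := by
  obtain ⟨K, hK, hKinf⟩ := hcpt
  obtain ⟨s, hs, y, hy⟩ := hKinf.exists_injective_accPt_range_of_isCompact hK
  obtain ⟨B, hB, hBbasis, hBcard⟩ := exists_nhds_basis_mk_eq_charAt (0 : G)
  by_contra! hlt
  have hwitness : ∀ V : B, ∀ m : ℕ, ∃ n, s n ≠ y ∧ (m + 1) • (ι (s n) - ι y) ∈ (V : Set G) := by
    intro V m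
    obtain ⟨_, ⟨n, rfl⟩, hne, hmem⟩ := hy.exists_nsmul_sub_mem hfree.1.continuous (hB V V.2) (m + 1)
    exact ⟨n, hne, hmem⟩
  choose gV hgV using hwitness
  obtain ⟨g, hg⟩ := exists_eventuallyLT_of_lift_mk_lt_boundingNumber gV (hBcard ▸ hlt)
  obtain ⟨ε, hε₀, hε, hεg⟩ := exists_tendsto_zero_one_le_mul g
  obtain ⟨φ, hφ, hφy, hφs⟩ := exists_lowerSemicontinuous_eq_neg hs y hε₀ hε
  obtain ⟨Φ, hΦ, hΦι⟩ := hfree.exists_lowerSemicontinuous_addMonoidHom hφ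
  obtain ⟨V, hVB, hVΦ⟩ := hBbasis _ (hΦ 0 (-1) (by simp))
  obtain ⟨M, hM⟩ := (hg ⟨V, hVB⟩).exists
  obtain ⟨hne, hmem⟩ := hgV ⟨V, hVB⟩ M
  have hΦM : -1 < Φ ((M + 1) • (ι (s (gV ⟨V, hVB⟩ M)) - ι y)) := hVΦ hmem
  simp only [map_nsmul, map_sub, hΦι, hφy, hφs _ hne, nsmul_eq_mul,
    sub_zero, Nat.cast_add, Nat.cast_one] at hΦM
  linarith [hεg M _ hM]
end
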